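/- arXiv:0712.2603 — 6 statements merged into one kernel-verified Lean document; each statement's English description precedes it below -/
import Mathlib

section
/- The moderate nets M(ℂ^{D_0}) form a subring of the ring of all nets D_0 → ℂ (with pointwise operations), the negligible nets N(ℂ^{D_0}) form an ideal of M(ℂ^{D_0}), and the quotient ring Ĉ^{D_0} = M(ℂ^{D_0})/N(ℂ^{D_0}) is a field which is algebraically closed: every polynomial of degree ≥ 1 with coefficients in Ĉ^{D_0} has a root in Ĉ^{D_0}. -/
open MeasureTheory Filter

noncomputable section

/-- ℝ^d with the Euclidean norm. -/
abbrev Rd (d : ℕ) := EuclideanSpace ℝ (Fin d)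

/-- The partial derivative in the `i`-th coordinate direction. -/
noncomputable def pderivI (d : ℕ) (i : Fin d) (f : Rd d → ℂ) : Rd d → ℂ :=
  fun x => fderiv ℝ f x (EuclideanSpace.single i (1 : ℝ))

/-- The iterated partial derivative `∂^α` of multi-index order `α`. -/
noncomputable def multiDeriv (d : ℕ) (α : Fin d → ℕ) (f : Rd d → ℂ) : Rd d → ℂ :=
  ((List.ofFn fun i : Fin d => (pderivI d i)^[α i]).foldr (· ∘ ·) id) f

-- The radius of support `R_φ`.
open Classical in
noncomputable def radSupp (d : ℕ) (φ : Rd d → ℂ) : ℝ :=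
  if φ = 0 then 1 else sSup {r : ℝ | ∃ x, φ x ≠ 0 ∧ r = ‖x‖}

/-- The type of test functions `D(ℝ^d)`: smooth compactly supported `φ : ℝ^d → ℂ`. -/
def TestFun (d : ℕ) := {φ : Rd d → ℂ // ContDiff ℝ (⊤ : ℕ∞) φ ∧ HasCompactSupport φ}

/-- The directing set `D_n`. -/
def directingSet (d n : ℕ) : Set (TestFun d) :=
  {φ | (∀ x, (φ.1 x).im = 0) ∧
       (∀ x, φ.1 (-x) = φ.1 x) ∧
       radSupp d φ.1 ≤ 1 / n ∧
       (∫ x, φ.1 x) = 1 ∧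
       (∀ α : Fin d → ℕ, 1 ≤ ∑ i, α i → ∑ i, α i ≤ n →
          (∫ x, (∏ i, (x i : ℂ) ^ α i) * φ.1 x) = 0) ∧
       (∫ x, ‖φ.1 x‖) ≤ 1 + 1 / n ∧
       (∀ α : Fin d → ℕ, ∑ i, α i ≤ n → ∀ x,
          ‖multiDeriv d α φ.1 x‖ ≤ radSupp d φ.1 ^ (-(2 * ((∑ i, α i) + d) : ℤ)))}

end

/-- A property of test functions holds *almost everywhere* if the set where it holds
belongs to the ultrafilter `U`; a complex net `A : D_0 → ℂ` is *moderate* if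
`|A_φ| ≤ R_φ^{−m}` a.e. for some `m ∈ ℕ`. -/
def Moderate (d : ℕ) (U : Ultrafilter (TestFun d)) (A : TestFun d → ℂ) : Prop :=
  ∃ m : ℕ, {φ : TestFun d | ‖A φ‖ ≤ radSupp d φ.1 ^ (-(m : ℤ))} ∈ U

/-- A complex net `A : D_0 → ℂ` is *negligible* if `|A_φ| < R_φ^p` a.e. for every `p ∈ ℕ`. -/
def Negligible (d : ℕ) (U : Ultrafilter (TestFun d)) (A : TestFun d → ℂ) : Prop :=
  ∀ p : ℕ, {φ : TestFun d | ‖A φ‖ < radSupp d φ.1 ^ p} ∈ U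

/-!
Moderateness and negligibility make sense for nets with values in any normed field, measured
against any scale `R` tending to `0⁺`; the ring and ideal properties use nothing else. Along an
ultrafilter, a net that is not negligible is bounded below by some power `R^q` almost everywhere,
so its pointwise inverse is moderate; likewise a polynomial whose leading coefficient is not
negligible can be solved pointwise, and Cauchy's bound on the roots makes the chosen root net
moderate. For test functions, `R_φ ≤ 1/n` on `D_n`, and `R_φ > 0` because a nonzero continuous
function on `ℝ^d` with `d ≥ 1` does not vanish off the origin.
-/

open Topology

section Nets

variable {ι 𝕜 : Type*} [NormedField 𝕜] {l : Filter ι} {R : ι → ℝ}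

def IsModerate (l : Filter ι) (R : ι → ℝ) (A : ι → 𝕜) : Prop :=
  ∃ m : ℕ, ∀ᶠ i in l, ‖A i‖ ≤ (R i)⁻¹ ^ m

def IsNegligible (l : Filter ι) (R : ι → ℝ) (A : ι → 𝕜) : Prop :=
  ∀ p : ℕ, ∀ᶠ i in l, ‖A i‖ < R i ^ p

theorem eventually_le_inv (hR : Tendsto R l (𝓝[>] 0)) (c : ℝ) : ∀ᶠ i in l, c ≤ (R i)⁻¹ :=
  (tendsto_inv_nhdsGT_zero.comp hR).eventually_ge_atTop c

theorem isModerate_one : IsModerate l R (1 : ι → 𝕜) :=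
  ⟨0, .of_forall fun _ => by simp⟩

theorem isModerate_zero : IsModerate l R (0 : ι → 𝕜) :=
  ⟨0, .of_forall fun _ => by simp⟩

theorem IsModerate.add (hR : Tendsto R l (𝓝[>] 0)) {A B : ι → 𝕜} (hA : IsModerate l R A)
    (hB : IsModerate l R B) : IsModerate l R (A + B) := by
  obtain ⟨m, hA⟩ := hA
  obtain ⟨n, hB⟩ := hB
  refine ⟨m + n + 1, ?_⟩
  filter_upwards [eventually_le_inv hR 2, hA, hB] with i ht hAi hBi
  have ht1 : 1 ≤ (R i)⁻¹ := by linarith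
  calc ‖(A + B) i‖ ≤ ‖A i‖ + ‖B i‖ := norm_add_le _ _
    _ ≤ 2 * (R i)⁻¹ ^ (m + n) := by
      linarith [pow_le_pow_right₀ ht1 (Nat.le_add_right m n),
        pow_le_pow_right₀ ht1 (Nat.le_add_left n m)]
    _ ≤ (R i)⁻¹ ^ (m + n + 1) := by
      rw [pow_succ']
      gcongr

theorem IsModerate.mul {A B : ι → 𝕜} (hA : IsModerate l R A) (hB : IsModerate l R B) :
    IsModerate l R (A * B) := by
  obtain ⟨m, hA⟩ := hA
  obtain ⟨n, hB⟩ := hB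
  refine ⟨m + n, ?_⟩
  filter_upwards [hA, hB] with i hAi hBi
  rw [Pi.mul_apply, norm_mul, pow_add]
  exact mul_le_mul hAi hBi (norm_nonneg _) ((norm_nonneg _).trans hAi)

theorem IsModerate.neg {A : ι → 𝕜} (hA : IsModerate l R A) : IsModerate l R (-A) := by
  simpa only [IsModerate, Pi.neg_apply, norm_neg] using hA

theorem IsNegligible.isModerate {A : ι → 𝕜} (hA : IsNegligible l R A) : IsModerate l R A :=
  ⟨0, (hA 0).mono fun _ h => by simpa using h.le⟩

theorem IsNegligible.congr {A B : ι → 𝕜} (hA : IsNegligible l R A) (hAB : A =ᶠ[l] B) :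
    IsNegligible l R B :=
  fun p => (hA p).congr (hAB.mono fun _ h => by rw [h])

theorem isNegligible_zero (hR : ∀ᶠ i in l, 0 < R i) : IsNegligible l R (0 : ι → 𝕜) :=
  fun p => hR.mono fun i h => by simpa using pow_pos h p

theorem IsNegligible.add (hR : Tendsto R l (𝓝[>] 0)) {A B : ι → 𝕜} (hA : IsNegligible l R A)
    (hB : IsNegligible l R B) : IsNegligible l R (A + B) := fun p => by
  filter_upwards [hR (Ioo_mem_nhdsGT (by norm_num : (0 : ℝ) < 1 / 2)), hA (p + 1), hB (p + 1)]
    with i ⟨hR0, hR2⟩ hAi hBi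
  have : 2 * R i ^ (p + 1) ≤ R i ^ p := by
    rw [pow_succ]
    nlinarith [pow_pos hR0 p]
  calc ‖(A + B) i‖ ≤ ‖A i‖ + ‖B i‖ := norm_add_le _ _
    _ < R i ^ p := by linarith

theorem IsNegligible.neg {A : ι → 𝕜} (hA : IsNegligible l R A) : IsNegligible l R (-A) := by
  simpa only [IsNegligible, Pi.neg_apply, norm_neg] using hA

theorem IsNegligible.isModerate_mul (hR : ∀ᶠ i in l, 0 < R i) {A B : ι → 𝕜}
    (hA : IsModerate l R A) (hB : IsNegligible l R B) : IsNegligible l R (A * B) := fun p => by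
  obtain ⟨m, hA⟩ := hA
  filter_upwards [hR, hA, hB (p + m)] with i hRi hAi hBi
  calc ‖(A * B) i‖ = ‖A i‖ * ‖B i‖ := norm_mul _ _
    _ ≤ (R i)⁻¹ ^ m * ‖B i‖ := by gcongr
    _ < (R i)⁻¹ ^ m * R i ^ (p + m) := by gcongr
    _ = R i ^ p := by
      rw [pow_add, inv_pow]
      field_simp

theorem exists_eventually_pow_le_norm_of_not_isNegligible {l : Ultrafilter ι} {A : ι → 𝕜}
    (hA : ¬IsNegligible l R A) : ∃ q : ℕ, ∀ᶠ i in l, R i ^ q ≤ ‖A i‖ := by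
  simp only [IsNegligible, not_forall, ← Ultrafilter.eventually_not, not_lt] at hA
  exact hA

theorem exists_isModerate_mul_sub_one_isNegligible {l : Ultrafilter ι}
    (hR : ∀ᶠ i in l, 0 < R i) {A : ι → 𝕜} (hA : ¬IsNegligible l R A) :
    ∃ B : ι → 𝕜, IsModerate l R B ∧ IsNegligible l R (A * B - 1) := by
  obtain ⟨q, hq⟩ := exists_eventually_pow_le_norm_of_not_isNegligible hA
  have hA0 : ∀ᶠ i in l, 0 < R i ∧ R i ^ q ≤ ‖A i‖ := hR.and hq
  refine ⟨A⁻¹, ⟨q, ?_⟩, (isNegligible_zero hR).congr ?_⟩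
  · filter_upwards [hA0] with i ⟨hRi, hAi⟩
    rw [Pi.inv_apply, norm_inv, inv_pow]
    exact inv_anti₀ (pow_pos hRi q) hAi
  · filter_upwards [hA0] with i ⟨hRi, hAi⟩
    have : A i ≠ 0 := norm_pos_iff.mp ((pow_pos hRi q).trans_le hAi)
    simp [this]

end Nets

section Roots

variable {𝕜 : Type*} [NormedField 𝕜]

open Polynomial in
theorem exists_root_norm_lt [IsAlgClosed 𝕜] {p : ℕ} (hp : 1 ≤ p) {a : ℕ → 𝕜} (hap : a p ≠ 0)
    {c : ℝ} (hc : ∀ k < p, ‖a k‖ ≤ c) :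
    ∃ z : 𝕜, ∑ k ∈ Finset.range (p + 1), a k * z ^ k = 0 ∧ ‖z‖ < c / ‖a p‖ + 1 := by
  set f : 𝕜[X] := ∑ k ∈ Finset.range (p + 1), C (a k) * X ^ k
  have hcoeff : ∀ k ≤ p, f.coeff k = a k := fun k hk => by
    simp [f, finsetSum_coeff, Nat.lt_succ_iff.mpr hk]
  have hdeg : f.natDegree = p := by
    refine natDegree_eq_of_le_of_coeff_ne_zero ?_ (by rwa [hcoeff p le_rfl])
    exact natDegree_sum_le_of_forall_le _ _ fun k hk =>
      (natDegree_C_mul_X_pow_le _ _).trans (Nat.lt_succ_iff.mp (Finset.mem_range.mp hk))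
  have hf0 : f ≠ 0 := by
    rintro h
    rw [h, natDegree_zero] at hdeg
    omega
  obtain ⟨z, hz⟩ := IsAlgClosed.exists_root f (natDegree_pos_iff_degree_pos.mp (by omega)).ne'
  refine ⟨z, by simpa [f, eval_finsetSum] using hz, ?_⟩
  have hc0 : 0 ≤ c := (norm_nonneg _).trans (hc 0 hp)
  have hsup : (Finset.range p).sup (fun k => ‖f.coeff k‖₊) ≤ (⟨c, hc0⟩ : NNReal) :=
    Finset.sup_le fun k hk => by
      rw [hcoeff k (Finset.mem_range.mp hk).le]
      exact NNReal.coe_le_coe.mp (hc k (Finset.mem_range.mp hk))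
  have hbound := hz.norm_lt_cauchyBound hf0
  rw [cauchyBound, leadingCoeff, hdeg, hcoeff p le_rfl, ← NNReal.coe_lt_coe] at hbound
  calc ‖z‖ < _ := hbound
    _ ≤ c / ‖a p‖ + 1 := by
      push_cast
      gcongr
      exact NNReal.coe_le_coe.mpr hsup

variable {ι : Type*} {R : ι → ℝ}

theorem exists_eventually_forall_norm_le_inv_pow {l : Filter ι} (hR : Tendsto R l (𝓝[>] 0))
    {s : Finset ℕ} {a : ℕ → ι → 𝕜} (ha : ∀ k ∈ s, IsModerate l R (a k)) :
    ∃ M : ℕ, ∀ᶠ i in l, ∀ k ∈ s, ‖a k i‖ ≤ (R i)⁻¹ ^ M := by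
  choose! m hm using ha
  refine ⟨s.sup m, ?_⟩
  filter_upwards [eventually_le_inv hR 1, (eventually_all_finset s).2 hm] with i ht hi k hk
  exact (hi k hk).trans (pow_le_pow_right₀ ht (Finset.le_sup hk))

theorem exists_isModerate_root_isNegligible [IsAlgClosed 𝕜] {l : Ultrafilter ι}
    (hR : Tendsto R l (𝓝[>] 0)) {p : ℕ} (hp : 1 ≤ p) {a : ℕ → ι → 𝕜}
    (ha : ∀ k ≤ p, IsModerate l R (a k)) (hap : ¬IsNegligible l R (a p)) :
    ∃ X : ι → 𝕜, IsModerate l R X ∧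
      IsNegligible l R (fun i => ∑ k ∈ Finset.range (p + 1), a k i * X i ^ k) := by
  obtain ⟨q, hq⟩ := exists_eventually_pow_le_norm_of_not_isNegligible hap
  obtain ⟨M, hM⟩ := exists_eventually_forall_norm_le_inv_pow hR (s := Finset.Iic p)
    fun k hk => ha k (Finset.mem_Iic.mp hk)
  have hroot : ∀ i, ∃ z : 𝕜, (a p i ≠ 0 ∧ ∀ k < p, ‖a k i‖ ≤ (R i)⁻¹ ^ M) →
      ∑ k ∈ Finset.range (p + 1), a k i * z ^ k = 0 ∧ ‖z‖ < (R i)⁻¹ ^ M / ‖a p i‖ + 1 := by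
    intro i
    by_cases h : a p i ≠ 0 ∧ ∀ k < p, ‖a k i‖ ≤ (R i)⁻¹ ^ M
    · exact (exists_root_norm_lt hp h.1 h.2).imp fun _ hz _ => hz
    · exact ⟨0, fun h' => absurd h' h⟩
  choose X hX using hroot
  have hpos : ∀ᶠ i in l, 0 < R i := hR.eventually self_mem_nhdsWithin
  have hgood : ∀ᶠ i in l, 2 ≤ (R i)⁻¹ ∧ ‖a p i‖⁻¹ ≤ (R i)⁻¹ ^ q ∧
      ∑ k ∈ Finset.range (p + 1), a k i * X i ^ k = 0 ∧
      ‖X i‖ < (R i)⁻¹ ^ M / ‖a p i‖ + 1 := by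
    filter_upwards [eventually_le_inv hR 2, hpos, hq, hM] with i ht hRi hqi hMi
    have hap0 : 0 < ‖a p i‖ := (pow_pos hRi q).trans_le hqi
    refine ⟨ht, ?_, hX i ⟨norm_pos_iff.mp hap0, fun k hk => hMi k (Finset.mem_Iic.mpr hk.le)⟩⟩
    rw [inv_pow]
    exact inv_anti₀ (pow_pos hRi q) hqi
  refine ⟨X, ⟨M + q + 1, ?_⟩, (isNegligible_zero hpos).congr ?_⟩
  · filter_upwards [hgood] with i ⟨ht, hinv, _, hXi⟩
    have ht1 : 1 ≤ (R i)⁻¹ ^ (M + q) := one_le_pow₀ (by linarith)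
    calc ‖X i‖ ≤ (R i)⁻¹ ^ M * ‖a p i‖⁻¹ + 1 := by rw [← div_eq_mul_inv]; exact hXi.le
      _ ≤ (R i)⁻¹ ^ M * (R i)⁻¹ ^ q + (R i)⁻¹ ^ (M + q) := by gcongr
      _ = 2 * (R i)⁻¹ ^ (M + q) := by ring
      _ ≤ (R i)⁻¹ ^ (M + q + 1) := by rw [pow_succ']; gcongr
  · filter_upwards [hgood] with i ⟨_, _, hXi, _⟩
    exact hXi.symm

end Roots

section TestFunctions

variable {d : ℕ}

theorem radSupp_pos (hd : 0 < d) {φ : TestFun d} (hφ : φ.1 ≠ 0) : 0 < radSupp d φ.1 := by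
  have hbdd : BddAbove {r : ℝ | ∃ x, φ.1 x ≠ 0 ∧ r = ‖x‖} :=
    (φ.2.2.isCompact.image continuous_norm).bddAbove.mono <| by
      rintro _ ⟨x, hx, rfl⟩
      exact ⟨x, subset_tsupport _ hx, rfl⟩
  have : Nonempty (Fin d) := ⟨⟨0, hd⟩⟩
  obtain ⟨x₀, hx₀⟩ := Function.ne_iff.mp hφ
  obtain ⟨x, hx, hx0⟩ := (dense_compl_singleton (0 : Rd d)).inter_open_nonempty _
    (isOpen_ne_fun φ.2.1.continuous continuous_const) ⟨x₀, hx₀⟩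
  rw [radSupp, if_neg hφ]
  exact (norm_pos_iff.mpr hx0).trans_le (le_csSup hbdd ⟨x, hx, rfl⟩)

theorem tendsto_radSupp_nhdsGT_zero (hd : 0 < d) {U : Filter (TestFun d)}
    (hU : ∀ n : ℕ, 1 ≤ n → directingSet d n ∈ U) :
    Tendsto (fun φ : TestFun d => radSupp d φ.1) U (𝓝[>] 0) := by
  have hpos : ∀ᶠ φ : TestFun d in U, 0 < radSupp d φ.1 :=
    Filter.mem_of_superset (hU 1 le_rfl) fun φ hφ =>
      radSupp_pos hd fun h => by simpa [h] using hφ.2.2.2.1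
  refine tendsto_nhdsWithin_iff.mpr ⟨tendsto_order.mpr ⟨?_, fun b hb => ?_⟩, hpos⟩
  · exact fun a ha => hpos.mono fun _ h => ha.trans h
  · obtain ⟨n, hn⟩ := exists_nat_one_div_lt hb
    refine Filter.mem_of_superset (hU (n + 1) (by omega)) fun φ hφ => hφ.2.2.1.trans_lt ?_
    exact_mod_cast hn

theorem moderate_iff_isModerate {U : Ultrafilter (TestFun d)} {A : TestFun d → ℂ} :
    Moderate d U A ↔ IsModerate (U : Filter (TestFun d)) (fun φ => radSupp d φ.1) A := by
  simp only [Moderate, IsModerate, zpow_neg, zpow_natCast, inv_pow]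
  rfl

theorem negligible_iff_isNegligible {U : Ultrafilter (TestFun d)} {A : TestFun d → ℂ} :
    Negligible d U A ↔ IsNegligible (U : Filter (TestFun d)) (fun φ => radSupp d φ.1) A :=
  Iff.rfl

end TestFunctions

/-- the moderate nets form a subring of `ℂ^{D_0}`, the negligible nets form an
ideal of the moderate nets, and the quotient `Ĉ^{D_0} = M(ℂ^{D_0})/N(ℂ^{D_0})` is an
algebraically closed field (every nonzero class has an inverse, and every polynomial of
degree `p ≥ 1` over the quotient has a root), all stated elementwise on representatives. -/
theorem moderate_negligible_quotient_algebraically_closed_field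
    (d : ℕ) (hd : 0 < d) (U : Ultrafilter (TestFun d))
    (hU : ∀ n : ℕ, 1 ≤ n → directingSet d n ∈ U) :
    -- M(ℂ^{D_0}) is a subring of ℂ^{D_0}
    (Moderate d U 1 ∧ Moderate d U 0 ∧
      ∀ A B : TestFun d → ℂ, Moderate d U A → Moderate d U B →
        Moderate d U (A + B) ∧ Moderate d U (A * B) ∧ Moderate d U (-A)) ∧
    -- N(ℂ^{D_0}) is an ideal of M(ℂ^{D_0})
    ((∀ A : TestFun d → ℂ, Negligible d U A → Moderate d U A) ∧
      Negligible d U 0 ∧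
      (∀ A B : TestFun d → ℂ, Negligible d U A → Negligible d U B → Negligible d U (A + B)) ∧
      (∀ A : TestFun d → ℂ, Negligible d U A → Negligible d U (-A)) ∧
      (∀ A B : TestFun d → ℂ, Moderate d U A → Negligible d U B → Negligible d U (A * B))) ∧
    -- the quotient is a field
    (∀ A : TestFun d → ℂ, Moderate d U A → ¬ Negligible d U A →
      ∃ B : TestFun d → ℂ, Moderate d U B ∧ Negligible d U (A * B - 1)) ∧
    -- the quotient is algebraically closed
    (∀ p : ℕ, 1 ≤ p → ∀ a : ℕ → TestFun d → ℂ,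
      (∀ k ≤ p, Moderate d U (a k)) → ¬ Negligible d U (a p) →
      ∃ X : TestFun d → ℂ, Moderate d U X ∧
        Negligible d U (fun φ => ∑ k ∈ Finset.range (p + 1), a k φ * X φ ^ k)) := by
  have hR := tendsto_radSupp_nhdsGT_zero hd (U := U) hU
  have hpos := hR.eventually self_mem_nhdsWithin
  simp only [moderate_iff_isModerate, negligible_iff_isNegligible]
  exact ⟨⟨isModerate_one, isModerate_zero, fun A B hA hB => ⟨hA.add hR hB, hA.mul hB, hA.neg⟩⟩,
    ⟨fun A hA => hA.isModerate, isNegligible_zero hpos, fun A B hA hB => hA.add hR hB,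
      fun A hA => hA.neg, fun A B hA hB => hB.isModerate_mul hpos hA⟩,
    fun A _ hA => exists_isModerate_mul_sub_one_isNegligible hpos hA,
    fun p hp a ha hap => exists_isModerate_root_isNegligible hR hp ha hap⟩
end

section
/- Let U be an ultrafilter on a set I, *ℝ = Germ U ℝ, and let A : I → Set ℝ be a net of subsets of ℝ with associated internal set ⟨A⟩ ⊆ *ℝ. Suppose ⟨A⟩ is nonempty and bounded above in *ℝ. Then {i ∈ I : A_i is nonempty and bounded above} ∈ U, and the germ of the net i ↦ sSup(A_i) is the least upper bound of ⟨A⟩ in *ℝ: it is an upper bound of ⟨A⟩, and it is ≤ every upper bound of ⟨A⟩. -/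
open Filter

/-- The internal subset of `*ℝ = Germ U ℝ` associated with a net of sets `A : I → Set ℝ`. -/
def internalSet {I : Type*} (U : Ultrafilter I) (A : I → Set ℝ) :
    Set (Filter.Germ (U : Filter I) ℝ) :=
  {ξ | ∃ x : I → ℝ, (↑x : Filter.Germ (U : Filter I) ℝ) = ξ ∧ ∀ᶠ i in (U : Filter I), x i ∈ A i}

/-- If `↑y` is an upper bound of the internal set, then `y i` bounds `A i` for a.e. `i`. -/
lemma aux_ub {I : Type*} (U : Ultrafilter I) (A : I → Set ℝ) (x : I → ℝ)
    (hxA : ∀ᶠ i in (U : Filter I), x i ∈ A i) (y : I → ℝ)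
    (hy : (↑y : Filter.Germ (U : Filter I) ℝ) ∈ upperBounds (internalSet U A)) :
    ∀ᶠ i in (U : Filter I), ∀ a ∈ A i, a ≤ y i := by
  by_contra hcon
  rw [Filter.not_eventually] at hcon
  have hS : ∀ᶠ i in (U : Filter I), ∃ a ∈ A i, y i < a := by
    rw [← Ultrafilter.frequently_iff_eventually]
    refine hcon.mono fun i hi => ?_
    push_neg at hi
    exact hi
  classical
  set z : I → ℝ := fun i => if h : ∃ a ∈ A i, y i < a then h.choose else x i with hz
  have hzA : ∀ᶠ i in (U : Filter I), z i ∈ A i := by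
    filter_upwards [hxA] with i hxi
    by_cases h : ∃ a ∈ A i, y i < a
    · simp only [hz, dif_pos h]
      exact h.choose_spec.1
    · simp only [hz, dif_neg h]
      exact hxi
  have hzmem : (↑z : Filter.Germ (U : Filter I) ℝ) ∈ internalSet U A := ⟨z, rfl, hzA⟩
  have hle : (↑z : Filter.Germ (U : Filter I) ℝ) ≤ ↑y := hy hzmem
  rw [Filter.Germ.coe_le] at hle
  obtain ⟨i, h1, h2⟩ := (hle.and hS).exists
  have : y i < z i := by
    simp only [hz, dif_pos h2]
    exact h2.choose_spec.2
  linarith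

/-- if the internal set `⟨A⟩ ⊆ *ℝ` is nonempty and bounded above, then
`A_i` is nonempty and bounded above for `U`-almost all `i`, and the germ of the net
`i ↦ sSup (A_i)` is the least upper bound of `⟨A⟩` in `*ℝ`. -/
theorem internalSet_isLUB {I : Type*} (U : Ultrafilter I) (A : I → Set ℝ)
    (hne : (internalSet U A).Nonempty) (hbdd : BddAbove (internalSet U A)) :
    ({i : I | (A i).Nonempty ∧ BddAbove (A i)} ∈ U) ∧
    IsLUB (internalSet U A)
      (↑(fun i => sSup (A i)) : Filter.Germ (U : Filter I) ℝ) := by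
  obtain ⟨ξ, x, hxξ, hxA⟩ := hne
  obtain ⟨b, hb⟩ := hbdd
  obtain ⟨y, rfl⟩ : ∃ y : I → ℝ, (↑y : Filter.Germ (U : Filter I) ℝ) = b :=
    b.inductionOn fun y => ⟨y, rfl⟩
  have hub := aux_ub U A x hxA y hb
  have hT : ∀ᶠ i in (U : Filter I), (A i).Nonempty ∧ BddAbove (A i) := by
    filter_upwards [hxA, hub] with i hxi hubi
    exact ⟨⟨x i, hxi⟩, ⟨y i, fun a ha => hubi a ha⟩⟩
  refine ⟨hT, ?_, ?_⟩
  · rintro ξ' ⟨w, rfl, hwA⟩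
    rw [Filter.Germ.coe_le]
    filter_upwards [hwA, hT] with i hwi hTi
    exact le_csSup hTi.2 hwi
  · rintro c hc
    obtain ⟨y', rfl⟩ : ∃ y' : I → ℝ, (↑y' : Filter.Germ (U : Filter I) ℝ) = c :=
      c.inductionOn fun y' => ⟨y', rfl⟩
    have hub' := aux_ub U A x hxA y' hc
    rw [Filter.Germ.coe_le]
    filter_upwards [hT, hub'] with i hTi hubi
    exact csSup_le hTi.1 hubi
end

section
/- Overflow of the finite numbers: Let U be an ultrafilter on a set I, *ℝ = Germ U ℝ, and let A : I → Set ℝ be a net of subsets of ℝ with associated internal set ⟨A⟩ ⊆ *ℝ. If ⟨A⟩ contains arbitrarily large finite elements (for every real r there exists ξ ∈ ⟨A⟩ with ξ finite and ξ > r), then ⟨A⟩ contains arbitrarily small infinitely large elements: for every infinitely large H ∈ *ℝ with H > 0 there exists ξ ∈ ⟨A⟩ with ξ infinitely large and ξ ≤ H. -/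
open Filter

/-- `ξ ∈ *ℝ` is finite if `|ξ| < n` for some `n ∈ ℕ`. -/
def GermFinite {I : Type*} (U : Ultrafilter I) (ξ : Filter.Germ (U : Filter I) ℝ) : Prop :=
  ∃ n : ℕ, |ξ| < (n : Filter.Germ (U : Filter I) ℝ)

/-- `ξ ∈ *ℝ` is infinitely large if `n < |ξ|` for every `n ∈ ℕ`. -/
def GermInfinitelyLarge {I : Type*} (U : Ultrafilter I)
    (ξ : Filter.Germ (U : Filter I) ℝ) : Prop :=
  ∀ n : ℕ, (n : Filter.Germ (U : Filter I) ℝ) < |ξ|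

/-- overflow of the finite numbers: if the internal set `⟨A⟩` contains
arbitrarily large finite elements, then for every positive infinitely large `H ∈ *ℝ`
it contains an infinitely large element `≤ H`. -/
theorem internalSet_overflow {I : Type*} (U : Ultrafilter I) (A : I → Set ℝ)
    (h : ∀ r : ℝ, ∃ ξ ∈ internalSet U A,
      GermFinite U ξ ∧ (↑r : Filter.Germ (U : Filter I) ℝ) < ξ) :
    ∀ H : Filter.Germ (U : Filter I) ℝ, GermInfinitelyLarge U H → 0 < H →
      ∃ ξ ∈ internalSet U A, GermInfinitelyLarge U ξ ∧ ξ ≤ H := by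
  classical
  have h' : ∀ n : ℕ, ∃ x : I → ℝ, (∀ᶠ i in (U : Filter I), x i ∈ A i) ∧
      ∃ m : ℕ, (∀ᶠ i in (U : Filter I), x i < (m : ℝ)) ∧
        ∀ᶠ i in (U : Filter I), (n : ℝ) < x i := by
    intro n
    obtain ⟨ξ, ⟨x, hx, hxA⟩, ⟨m, hm⟩, hlt⟩ := h (n : ℝ)
    subst hx
    refine ⟨x, hxA, m, ?_, ?_⟩
    · have h1 : (x : Filter.Germ (U : Filter I) ℝ) < (m : Filter.Germ (U : Filter I) ℝ) :=
        lt_of_le_of_lt (le_abs_self _) hm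
      rw [← Filter.Germ.natCast_def] at h1
      exact Filter.Germ.coe_lt.1 h1
    · rw [show ((n : ℝ) : Filter.Germ (U : Filter I) ℝ)
        = ((fun _ => (n : ℝ) : I → ℝ) : Filter.Germ (U : Filter I) ℝ) from rfl] at hlt
      exact Filter.Germ.coe_lt.1 hlt
  choose x hxA m hxm hxn using h'
  intro H hH hH0
  revert hH hH0
  induction H using Filter.Germ.inductionOn with
  | _ hf =>
  intro hH hH0
  have hfpos : ∀ᶠ i in (U : Filter I), 0 < hf i := Filter.Germ.coe_pos.1 hH0
  have hfbig : ∀ k : ℕ, ∀ᶠ i in (U : Filter I), (k : ℝ) < hf i := by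
    intro k
    have := hH k
    rw [Filter.Germ.abs_def, Filter.Germ.map_coe, ← Filter.Germ.natCast_def,
      Filter.Germ.coe_lt] at this
    filter_upwards [this, hfpos] with i h1 h2
    simpa [abs_of_pos h2] using h1
  set s : I → Finset ℕ := fun i =>
    (Finset.range (⌊hf i⌋₊ + 1)).filter
      (fun n => x n i ∈ A i ∧ (n : ℝ) < x n i ∧ x n i ≤ hf i) with hs
  set y : I → ℝ := fun i => if hne : (s i).Nonempty then x ((s i).max' hne) i else 0 with hy
  have key : ∀ k : ℕ, ∀ᶠ i in (U : Filter I), k ∈ s i := by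
    intro k
    filter_upwards [hxA k, hxn k, hxm k, hfbig (m k), hfpos] with i h1 h2 h3 h4 h5
    have hxle : x k i ≤ hf i := le_of_lt (h3.trans h4)
    have hkle : (k : ℝ) ≤ hf i := le_of_lt (h2.trans_le hxle)
    simp only [hs, Finset.mem_filter, Finset.mem_range, Nat.lt_succ_iff]
    exact ⟨(Nat.le_floor_iff (le_of_lt h5)).2 hkle, h1, h2, hxle⟩
  have keyy : ∀ k : ℕ, ∀ᶠ i in (U : Filter I),
      y i ∈ A i ∧ (k : ℝ) < y i ∧ y i ≤ hf i := by
    intro k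
    filter_upwards [key k] with i hk
    have hne : (s i).Nonempty := ⟨k, hk⟩
    have hmax : (s i).max' hne ∈ s i := Finset.max'_mem _ _
    have hkmax : k ≤ (s i).max' hne := Finset.le_max' _ _ hk
    simp only [hs, Finset.mem_filter] at hmax
    obtain ⟨-, hA, hlt, hle⟩ := hmax
    have hyi : y i = x ((s i).max' hne) i := by simp [hy, hne]
    refine ⟨hyi ▸ hA, ?_, hyi ▸ hle⟩
    calc (k : ℝ) ≤ ((s i).max' hne : ℝ) := by exact_mod_cast hkmax
      _ < y i := hyi ▸ hlt
  refine ⟨(y : Filter.Germ (U : Filter I) ℝ), ⟨y, rfl, ?_⟩, ?_, ?_⟩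
  · filter_upwards [keyy 0] with i hi using hi.1
  · intro n
    rw [Filter.Germ.abs_def, Filter.Germ.map_coe, ← Filter.Germ.natCast_def,
      Filter.Germ.coe_lt]
    filter_upwards [keyy n] with i hi
    exact lt_of_lt_of_le hi.2.1 (le_abs_self _)
  · rw [Filter.Germ.coe_le]
    filter_upwards [keyy 0] with i hi using hi.2.2
end

section
/- Let U be an ultrafilter on a nonempty set I. Then *ℂ = Germ U ℂ is an algebraically closed field: it is a field and every polynomial over *ℂ of degree ≥ 1 has a root in *ℂ. Moreover *ℝ = Germ U ℝ is a real closed field: it is a linearly ordered field in which every nonnegative element is a square and every polynomial over *ℝ of odd degree has a root in *ℝ; and *ℂ = *ℝ ⊕ i·*ℝ (every element of *ℂ is uniquely of the form a + i·b with a, b germs of real-valued functions). -/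
open Filter

open Polynomial in
lemma germAux_odd_root_aux (P : Polynomial ℝ) (h : Odd P.natDegree)
    (hlc : 0 < P.leadingCoeff) : ∃ x, P.eval x = 0 := by
  have hn1 : 1 ≤ P.natDegree := h.pos
  have hdeg : 0 < P.degree := natDegree_pos_iff_degree_pos.1 hn1
  have htop : Tendsto (fun x => P.eval x) atTop atTop :=
    P.tendsto_atTop_of_leadingCoeff_nonneg hdeg hlc.le
  set Q := P.comp (-X) with hQ
  have hQdeg : Q.natDegree = P.natDegree := by
    rw [hQ, natDegree_comp]; simp
  have hQlc : Q.leadingCoeff = P.leadingCoeff * (-1) ^ P.natDegree := by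
    rw [hQ, leadingCoeff_comp (by simp)]; simp
  have hQlc' : Q.leadingCoeff < 0 := by
    rw [hQlc, h.neg_one_pow]; linarith
  have hQdegpos : 0 < Q.degree := by
    rw [← natDegree_pos_iff_degree_pos, hQdeg]; exact hn1
  have hbot : Tendsto (fun x => Q.eval x) atTop atBot :=
    Q.tendsto_atBot_of_leadingCoeff_nonpos hQdegpos hQlc'.le
  obtain ⟨a, ha⟩ := (htop.eventually_ge_atTop 0).exists
  obtain ⟨b, hb⟩ := (hbot.eventually_le_atBot 0).exists
  have hb' : P.eval (-b) ≤ 0 := by simpa [hQ] using hb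
  obtain ⟨x, hx⟩ := intermediate_value_univ (-b) a P.continuous (Set.mem_Icc.2 ⟨hb', ha⟩)
  exact ⟨x, hx⟩

open Polynomial in
lemma germAux_odd_root (P : Polynomial ℝ) (h : Odd P.natDegree) : ∃ x, P.eval x = 0 := by
  rcases lt_trichotomy P.leadingCoeff 0 with hlc | hlc | hlc
  · obtain ⟨x, hx⟩ := germAux_odd_root_aux (-P) (by simpa using h) (by simpa using hlc)
    exact ⟨x, by simpa using hx⟩
  · exact absurd (leadingCoeff_eq_zero.1 hlc) (fun h0 => by simp [h0] at h)
  · exact germAux_odd_root_aux P h hlc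

open Polynomial in
/-- pointwise polynomial from coefficient functions -/
noncomputable def germAuxPtPoly {I K : Type*} [Field K] (F : ℕ → I → K) (n : ℕ) (i : I) :
    Polynomial K :=
  ∑ k ∈ Finset.range (n + 1), C (F k i) * X ^ k

open Polynomial in
lemma germAuxPtPoly_coeff {I K : Type*} [Field K] (F : ℕ → I → K) (n : ℕ) (i : I) {m : ℕ}
    (hm : m ≤ n) : (germAuxPtPoly F n i).coeff m = F m i := by
  rw [germAuxPtPoly, finset_sum_coeff]
  simp only [coeff_C_mul, coeff_X_pow, mul_ite, mul_one, mul_zero]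
  rw [Finset.sum_ite_eq (Finset.range (n+1)) m (fun k => F k i)]
  simp [Nat.lt_succ_of_le hm]

open Polynomial in
lemma germAuxPtPoly_natDegree_le {I K : Type*} [Field K] (F : ℕ → I → K) (n : ℕ) (i : I) :
    (germAuxPtPoly F n i).natDegree ≤ n := by
  refine natDegree_sum_le_of_forall_le _ _ fun k hk => ?_
  calc (C (F k i) * X ^ k).natDegree ≤ k := natDegree_C_mul_le _ _ |>.trans (by simp)
  _ ≤ n := Nat.lt_succ_iff.1 (Finset.mem_range.1 hk)

open Polynomial in
lemma germAux_eval_eq {I K : Type*} [Field K] (U : Ultrafilter I)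
    (P : Polynomial (Germ (U : Filter I) K)) (F : ℕ → I → K)
    (hF : ∀ k, (↑(F k) : Germ (U : Filter I) K) = P.coeff k) (z : I → K) :
    P.eval (↑z) = ↑(fun i => (germAuxPtPoly F P.natDegree i).eval (z i)) := by
  rw [eval_eq_sum_range]
  calc ∑ k ∈ Finset.range (P.natDegree + 1), P.coeff k * (↑z : Germ (U : Filter I) K) ^ k
      = ∑ k ∈ Finset.range (P.natDegree + 1), (↑(F k * z ^ k) : Germ (U : Filter I) K) := by
        refine Finset.sum_congr rfl fun k _ => ?_
        rw [← hF k, Germ.coe_mul, Germ.coe_pow]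
    _ = ↑(∑ k ∈ Finset.range (P.natDegree + 1), F k * z ^ k) :=
        (map_sum (Germ.coeRingHom (U : Filter I)) _ _).symm
    _ = ↑(fun i => (germAuxPtPoly F P.natDegree i).eval (z i)) := by
        refine congrArg _ (funext fun i => ?_)
        rw [germAuxPtPoly, eval_finset_sum]
        simp [Finset.sum_apply]

open Polynomial in
/-- for an ultrafilter `U` on `I`, `*ℂ = Germ U ℂ` is an algebraically
closed field (nonzero elements are invertible and every polynomial of degree `≥ 1` has a
root), `*ℝ = Germ U ℝ` is a real closed field (a linearly ordered field — the order being
part of its `LinearOrderedField` instance — in which every nonnegative element is a square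
and every polynomial of odd degree has a root), and `*ℂ = *ℝ ⊕ i·*ℝ` (every element of
`*ℂ` is uniquely of the form `a + i·b` with `a`, `b` germs of real-valued functions). -/
theorem germ_algebraically_closed_real_closed {I : Type*} (U : Ultrafilter I) :
    -- *ℂ is a field
    (∀ z : Filter.Germ (U : Filter I) ℂ, z ≠ 0 → ∃ w, z * w = 1) ∧
    -- *ℂ is algebraically closed
    (∀ P : Polynomial (Filter.Germ (U : Filter I) ℂ), 1 ≤ P.degree →
      ∃ z, P.eval z = 0) ∧
    -- every nonnegative element of *ℝ is a square
    (∀ x : Filter.Germ (U : Filter I) ℝ, 0 ≤ x → ∃ y, y ^ 2 = x) ∧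
    -- every polynomial of odd degree over *ℝ has a root
    (∀ P : Polynomial (Filter.Germ (U : Filter I) ℝ), Odd P.natDegree →
      ∃ x, P.eval x = 0) ∧
    -- *ℂ = *ℝ ⊕ i·*ℝ
    (∀ z : Filter.Germ (U : Filter I) ℂ,
      ∃! p : Filter.Germ (U : Filter I) ℝ × Filter.Germ (U : Filter I) ℝ,
        z = Filter.Germ.map (fun a : ℝ => (a : ℂ)) p.1 +
            (↑(Complex.I) : Filter.Germ (U : Filter I) ℂ) *
              Filter.Germ.map (fun a : ℝ => (a : ℂ)) p.2) := by
  classical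
  refine ⟨fun z hz => ⟨z⁻¹, mul_inv_cancel₀ hz⟩, ?_, ?_, ?_, ?_⟩
  · -- algebraically closed
    intro P hP
    have hdeg : 0 < P.degree := lt_of_lt_of_le (by norm_num) hP
    have hn1 : 1 ≤ P.natDegree := natDegree_pos_iff_degree_pos.2 hdeg
    have hPne : P ≠ 0 := fun h => by simp [h] at hdeg
    set n := P.natDegree with hn
    set F : ℕ → I → ℂ := fun k => (P.coeff k).out with hFdef
    have hF : ∀ k, (↑(F k) : Germ (U : Filter I) ℂ) = P.coeff k := fun k => (P.coeff k).out_eq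
    have hlead : P.coeff n ≠ 0 := mt leadingCoeff_eq_zero.1 hPne
    have hae : ∀ᶠ i in (U : Filter I), F n i ≠ 0 := by
      refine Ultrafilter.eventually_not.2 fun hcon => hlead ?_
      rw [← hF n]
      exact Germ.coe_eq.2 hcon
    have hroot : ∀ i : I, ∃ x : ℂ, F n i ≠ 0 →
        (germAuxPtPoly F n i).eval x = 0 := by
      intro i
      by_cases hi : F n i = 0
      · exact ⟨0, fun h => absurd hi h⟩
      · have hdi : (germAuxPtPoly F n i).natDegree = n :=
          le_antisymm (germAuxPtPoly_natDegree_le F n i)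
            (le_natDegree_of_ne_zero (by rwa [germAuxPtPoly_coeff F n i le_rfl]))
        have : 0 < (germAuxPtPoly F n i).degree :=
          natDegree_pos_iff_degree_pos.1 (by rw [hdi]; exact hn1)
        obtain ⟨x, hx⟩ := Complex.exists_root this
        exact ⟨x, fun _ => hx⟩
    choose z hz using hroot
    refine ⟨↑z, ?_⟩
    rw [germAux_eval_eq U P F hF z]
    have h0 : (0 : Germ (U : Filter I) ℂ) = ↑(fun _ : I => (0 : ℂ)) := rfl
    rw [h0]
    refine Germ.coe_eq.2 ?_
    filter_upwards [hae] with i hi using hz i hi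
  · -- nonneg is a square
    intro x hx
    obtain ⟨f, hf⟩ : ∃ f : I → ℝ, (↑f : Germ (U : Filter I) ℝ) = x := ⟨x.out, x.out_eq⟩
    have h0 : (0 : Germ (U : Filter I) ℝ) = ↑(fun _ : I => (0 : ℝ)) := rfl
    have hle : ∀ᶠ i in (U : Filter I), (0 : ℝ) ≤ f i := by
      rw [← hf, h0] at hx
      exact Germ.coe_le.1 hx
    refine ⟨↑(fun i => Real.sqrt (f i)), ?_⟩
    rw [← Germ.coe_pow, ← hf]
    refine Germ.coe_eq.2 ?_
    filter_upwards [hle] with i hi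
    simp [Real.sq_sqrt hi]
  · -- odd degree real polynomial has a root
    intro P hodd
    have hn1 : 1 ≤ P.natDegree := hodd.pos
    have hPne : P ≠ 0 := fun h => by simp [h] at hn1
    set n := P.natDegree with hn
    set F : ℕ → I → ℝ := fun k => (P.coeff k).out with hFdef
    have hF : ∀ k, (↑(F k) : Germ (U : Filter I) ℝ) = P.coeff k := fun k => (P.coeff k).out_eq
    have hlead : P.coeff n ≠ 0 := mt leadingCoeff_eq_zero.1 hPne
    have hae : ∀ᶠ i in (U : Filter I), F n i ≠ 0 := by
      refine Ultrafilter.eventually_not.2 fun hcon => hlead ?_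
      rw [← hF n]
      exact Germ.coe_eq.2 hcon
    have hroot : ∀ i : I, ∃ x : ℝ, F n i ≠ 0 →
        (germAuxPtPoly F n i).eval x = 0 := by
      intro i
      by_cases hi : F n i = 0
      · exact ⟨0, fun h => absurd hi h⟩
      · have hdi : (germAuxPtPoly F n i).natDegree = n :=
          le_antisymm (germAuxPtPoly_natDegree_le F n i)
            (le_natDegree_of_ne_zero (by rwa [germAuxPtPoly_coeff F n i le_rfl]))
        obtain ⟨x, hx⟩ := germAux_odd_root (germAuxPtPoly F n i) (by rw [hdi]; exact hodd)
        exact ⟨x, fun _ => hx⟩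
    choose z hz using hroot
    refine ⟨↑z, ?_⟩
    rw [germAux_eval_eq U P F hF z]
    have h0 : (0 : Germ (U : Filter I) ℝ) = ↑(fun _ : I => (0 : ℝ)) := rfl
    rw [h0]
    refine Germ.coe_eq.2 ?_
    filter_upwards [hae] with i hi using hz i hi
  · -- *ℂ = *ℝ ⊕ i·*ℝ
    intro w
    obtain ⟨g, hg⟩ : ∃ g : I → ℂ, (↑g : Germ (U : Filter I) ℂ) = w := ⟨w.out, w.out_eq⟩
    have hI : ((Complex.I : ℂ) : Germ (U : Filter I) ℂ) = ↑(fun _ : I => Complex.I) := rfl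
    have key : ∀ a b : I → ℝ,
        Germ.map (fun r : ℝ => (r : ℂ)) (↑a : Germ (U : Filter I) ℝ) +
          ((Complex.I : ℂ) : Germ (U : Filter I) ℂ) *
            Germ.map (fun r : ℝ => (r : ℂ)) (↑b : Germ (U : Filter I) ℝ) =
          ↑(fun i => ((a i : ℂ) + Complex.I * (b i : ℂ))) := by
      intro a b
      rw [Germ.map_coe, Germ.map_coe, hI, ← Germ.coe_mul, ← Germ.coe_add]
      rfl
    refine ⟨(↑(fun i => (g i).re), ↑(fun i => (g i).im)), ?_, ?_⟩
    · beta_reduce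
      rw [key, ← hg]
      refine (Germ.coe_eq.2 (Eventually.of_forall fun i => ?_)).symm
      rw [mul_comm]
      exact (Complex.re_add_im (g i))
    · rintro ⟨a, b⟩ hab
      obtain ⟨fa, hfa⟩ : ∃ f : I → ℝ, (↑f : Germ (U : Filter I) ℝ) = a := ⟨a.out, a.out_eq⟩
      obtain ⟨fb, hfb⟩ : ∃ f : I → ℝ, (↑f : Germ (U : Filter I) ℝ) = b := ⟨b.out, b.out_eq⟩
      simp only at hab
      rw [← hfa, ← hfb, key] at hab
      rw [← hg] at hab
      have hev := Germ.coe_eq.1 hab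
      have hre : ∀ᶠ i in (U : Filter I), fa i = (g i).re ∧ fb i = (g i).im := by
        filter_upwards [hev] with i hi
        have h1 := congrArg Complex.re hi
        have h2 := congrArg Complex.im hi
        simp at h1 h2
        exact ⟨h1.symm, h2.symm⟩
      refine Prod.ext ?_ ?_
      · rw [← hfa]
        exact Germ.coe_eq.2 (hre.mono fun i hi => hi.1)
      · rw [← hfb]
        exact Germ.coe_eq.2 (hre.mono fun i hi => hi.2)
end

section
/- Let U be an ultrafilter on a set I, *ℝ = Germ U ℝ, *ℂ = Germ U ℂ with the absolute value |·| : *ℂ → *ℝ induced pointwise, and let ρ ∈ *ℝ be a positive infinitesimal (0 < ρ and ρ < 1/n for all n ∈ ℕ). Then the ρ-moderate numbers M_ρ(*ℂ) form a subring of *ℂ, the ρ-negligible numbers N_ρ(*ℂ) form an ideal of M_ρ(*ℂ), and the quotient ^ρℂ = M_ρ(*ℂ)/N_ρ(*ℂ) is an algebraically closed field: every polynomial over ^ρℂ of degree ≥ 1 has a root in ^ρℂ. Likewise ^ρℝ = M_ρ(*ℝ)/N_ρ(*ℝ) is a field in which every element is either a square or the negative of a square (a real closed field), and ^ρℂ =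 ^ρℝ(i). -/
/-!
Moderate and negligible elements make sense for any absolute value `v : R → K` with values in an
ordered field, and the ring, ideal and field properties of `M_ρ` and `N_ρ` hold in that
generality. For algebraic closedness, `*ℂ` is itself algebraically closed (pick roots
pointwise), and a root `z` of `∑ a_k X^k` is moderate when the `a_k` are moderate and `a_p` is not
negligible, by Cauchy's bound `|a_p| |z| ≤ ∑ |a_k|`. Square roots in `*ℝ` and the decomposition
`ζ = Re ζ + i Im ζ` in `*ℂ` are exact, again taken pointwise.
-/

open Filter

/-- `ζ ∈ *ℂ` is `ρ`-moderate: `|ζ| ≤ ρ^{−m}` for some `m ∈ ℕ` (in `*ℝ`). -/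
def ModerateGC {I : Type*} (U : Ultrafilter I) (ρ : Filter.Germ (U : Filter I) ℝ)
    (ζ : Filter.Germ (U : Filter I) ℂ) : Prop :=
  ∃ m : ℕ, Filter.Germ.map (fun z : ℂ => ‖z‖) ζ ≤ ρ ^ (-(m : ℤ))

/-- `ζ ∈ *ℂ` is `ρ`-negligible: `|ζ| < ρ^n` for every `n ∈ ℕ`. -/
def NegligibleGC {I : Type*} (U : Ultrafilter I) (ρ : Filter.Germ (U : Filter I) ℝ)
    (ζ : Filter.Germ (U : Filter I) ℂ) : Prop :=
  ∀ n : ℕ, Filter.Germ.map (fun z : ℂ => ‖z‖) ζ < ρ ^ n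

/-- `ξ ∈ *ℝ` is `ρ`-moderate. -/
def ModerateGR {I : Type*} (U : Ultrafilter I) (ρ : Filter.Germ (U : Filter I) ℝ)
    (ξ : Filter.Germ (U : Filter I) ℝ) : Prop :=
  ∃ m : ℕ, |ξ| ≤ ρ ^ (-(m : ℤ))

/-- `ξ ∈ *ℝ` is `ρ`-negligible. -/
def NegligibleGR {I : Type*} (U : Ultrafilter I) (ρ : Filter.Germ (U : Filter I) ℝ)
    (ξ : Filter.Germ (U : Filter I) ℝ) : Prop :=
  ∀ n : ℕ, |ξ| < ρ ^ n

section

variable {K : Type*} [Field K] [LinearOrder K] [IsStrictOrderedRing K] {ρ : K}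

theorem two_mul_zpow_neg_le (hρ : 0 < ρ) (h2 : 2 * ρ ≤ 1) (m : ℕ) :
    2 * ρ ^ (-(m : ℤ)) ≤ ρ ^ (-((m + 1 : ℕ) : ℤ)) := by
  have h2' : 2 ≤ ρ⁻¹ := by simpa using (le_inv_mul_iff₀ hρ (b := 1)).2 (by linarith)
  simp only [zpow_neg, zpow_natCast, pow_succ, mul_inv, mul_comm _ ρ⁻¹]
  exact mul_le_mul_of_nonneg_right h2' (inv_nonneg.2 (pow_nonneg hρ.le m))

end

namespace AbsoluteValue

variable {R K : Type*} [Field K] [LinearOrder K]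

section Semiring

variable [Semiring R] (v : AbsoluteValue R K) (ρ : K)

def IsModerate (x : R) : Prop := ∃ m : ℕ, v x ≤ ρ ^ (-(m : ℤ))

def IsNegligible (x : R) : Prop := ∀ n : ℕ, v x < ρ ^ n

variable {v ρ} {x y : R}

theorem isModerate_one [Nontrivial R] : v.IsModerate ρ 1 := ⟨0, by simp⟩

theorem IsNegligible.isModerate (h : v.IsNegligible ρ x) : v.IsModerate ρ x :=
  ⟨0, by simpa using (h 0).le⟩

theorem exists_pow_le_of_not_isNegligible (h : ¬ v.IsNegligible ρ x) : ∃ n : ℕ, ρ ^ n ≤ v x := by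
  simpa [IsNegligible] using h

theorem IsModerate.of_le {S : Type*} [Semiring S] {v' : AbsoluteValue S K} {y : S}
    (hy : v'.IsModerate ρ y) (h : v x ≤ v' y) : v.IsModerate ρ x :=
  hy.imp fun _ hm => h.trans hm

variable [IsStrictOrderedRing K]

theorem isModerate_zero : v.IsModerate ρ 0 := ⟨0, by simp⟩

theorem isNegligible_zero (hρ : 0 < ρ) : v.IsNegligible ρ 0 := fun n => by
  simpa using pow_pos hρ n

theorem ne_zero_of_not_isNegligible (hρ : 0 < ρ) (h : ¬ v.IsNegligible ρ x) : x ≠ 0 := by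
  rintro rfl
  exact h (isNegligible_zero hρ)

theorem isModerate_abs_apply_iff : AbsoluteValue.abs.IsModerate ρ (v x) ↔ v.IsModerate ρ x := by
  simp only [IsModerate, AbsoluteValue.abs_apply, abs_of_nonneg (v.nonneg x)]

theorem isModerate_inv_pow (hρ : 0 < ρ) (n : ℕ) : AbsoluteValue.abs.IsModerate ρ (ρ ^ n)⁻¹ :=
  ⟨n, by rw [abs_apply, abs_of_pos (inv_pos.2 (pow_pos hρ n)), zpow_neg, zpow_natCast]⟩

theorem IsModerate.add (hρ : 0 < ρ) (h2 : 2 * ρ ≤ 1) (hx : v.IsModerate ρ x)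
    (hy : v.IsModerate ρ y) : v.IsModerate ρ (x + y) := by
  obtain ⟨m₁, h₁⟩ := hx
  obtain ⟨m₂, h₂⟩ := hy
  have hρ1 : ρ ≤ 1 := by linarith
  have hmono : ∀ m ≤ max m₁ m₂, ρ ^ (-(m : ℤ)) ≤ ρ ^ (-((max m₁ m₂ : ℕ) : ℤ)) := fun m hm =>
    zpow_le_zpow_right_of_le_one₀ hρ hρ1 (by omega)
  refine ⟨max m₁ m₂ + 1, ?_⟩
  calc v (x + y) ≤ v x + v y := v.add_le x y
    _ ≤ 2 * ρ ^ (-((max m₁ m₂ : ℕ) : ℤ)) := by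
      linarith [h₁.trans (hmono m₁ (le_max_left _ _)), h₂.trans (hmono m₂ (le_max_right _ _))]
    _ ≤ _ := two_mul_zpow_neg_le hρ h2 _

theorem IsModerate.mul (hx : v.IsModerate ρ x) (hy : v.IsModerate ρ y) :
    v.IsModerate ρ (x * y) := by
  obtain ⟨m₁, h₁⟩ := hx
  obtain ⟨m₂, h₂⟩ := hy
  refine ⟨m₁ + m₂, ?_⟩
  calc v (x * y) = v x * v y := v.map_mul x y
    _ ≤ ρ ^ (-(m₁ : ℤ)) * ρ ^ (-(m₂ : ℤ)) := mul_le_mul h₁ h₂ (v.nonneg y) ((v.nonneg x).trans h₁)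
    _ = ρ ^ (-((m₁ + m₂ : ℕ) : ℤ)) := by simp only [zpow_neg, zpow_natCast, pow_add, mul_inv]

theorem IsModerate.mul_isNegligible (hρ : 0 < ρ) (hx : v.IsModerate ρ x)
    (hy : v.IsNegligible ρ y) : v.IsNegligible ρ (x * y) := by
  obtain ⟨m, hm⟩ := hx
  intro n
  have hm' : v x ≤ (ρ ^ m)⁻¹ := by simpa [zpow_neg] using hm
  calc v (x * y) = v x * v y := v.map_mul x y
    _ ≤ (ρ ^ m)⁻¹ * v y := mul_le_mul_of_nonneg_right hm' (v.nonneg y)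
    _ < (ρ ^ m)⁻¹ * ρ ^ (n + m) := mul_lt_mul_of_pos_left (hy _) (inv_pos.2 (pow_pos hρ m))
    _ = ρ ^ n := by rw [pow_add, mul_comm, mul_assoc, mul_inv_cancel₀ (pow_pos hρ m).ne', mul_one]

theorem IsNegligible.add (hρ : 0 < ρ) (h2 : 2 * ρ ≤ 1) (hx : v.IsNegligible ρ x)
    (hy : v.IsNegligible ρ y) : v.IsNegligible ρ (x + y) := fun n =>
  calc v (x + y) ≤ v x + v y := v.add_le x y
    _ < ρ ^ (n + 1) + ρ ^ (n + 1) := add_lt_add (hx _) (hy _)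
    _ = 2 * ρ * ρ ^ n := by ring
    _ ≤ ρ ^ n := mul_le_of_le_one_left (pow_pos hρ n).le h2

theorem IsModerate.sum (hρ : 0 < ρ) (h2 : 2 * ρ ≤ 1) {ι : Type*} {s : Finset ι} {f : ι → R}
    (hf : ∀ i ∈ s, v.IsModerate ρ (f i)) : v.IsModerate ρ (∑ i ∈ s, f i) := by
  classical
  induction s using Finset.induction_on with
  | empty => simpa using isModerate_zero
  | insert i s hi ih =>
    rw [Finset.sum_insert hi]
    exact (hf i (Finset.mem_insert_self i s)).add hρ h2
      (ih fun j hj => hf j (Finset.mem_insert_of_mem hj))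

theorem IsModerate.of_pow [Nontrivial R] (hρ : 0 < ρ) (hρ1 : ρ ≤ 1) {n : ℕ} (hn : n ≠ 0)
    (h : v.IsModerate ρ (x ^ n)) : v.IsModerate ρ x := by
  obtain ⟨m, hm⟩ := h
  refine ⟨m, ?_⟩
  rcases le_total (v x) 1 with hx | hx
  · exact hx.trans (one_le_zpow_of_nonpos₀ hρ hρ1 (by omega))
  · exact (le_self_pow₀ hx hn).trans (by rwa [← v.map_pow])

end Semiring

section Ring

variable [IsStrictOrderedRing K] [Ring R] {v : AbsoluteValue R K} {ρ : K} {x : R}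

theorem IsModerate.neg (hx : v.IsModerate ρ x) : v.IsModerate ρ (-x) := by
  rwa [IsModerate, v.map_neg]

theorem IsNegligible.neg (hx : v.IsNegligible ρ x) : v.IsNegligible ρ (-x) := by
  rwa [IsNegligible, v.map_neg]

theorem mul_le_sum_of_sum_mul_pow_eq_zero [Nontrivial R] (v : AbsoluteValue R K) {p : ℕ}
    {a : ℕ → R} {z : R} (hz : ∑ k ∈ Finset.range (p + 1), a k * z ^ k = 0) :
    v (a p) * v z ≤ ∑ k ∈ Finset.range (p + 1), v (a k) := by
  rw [Finset.sum_range_succ]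
  rcases le_or_gt (v z) 1 with hz1 | hz1
  · exact (mul_le_of_le_one_right (v.nonneg _) hz1).trans
      (le_add_of_nonneg_left (Finset.sum_nonneg fun k _ => v.nonneg (a k)))
  rw [Finset.sum_range_succ] at hz
  have hlead : a p * z ^ p = -∑ k ∈ Finset.range p, a k * z ^ k := eq_neg_of_add_eq_zero_right hz
  have key : v (a p) * v z * v z ^ p ≤ (∑ k ∈ Finset.range p, v (a k)) * v z ^ p :=
    calc v (a p) * v z * v z ^ p = v (a p * z ^ p) * v z := by rw [v.map_mul, v.map_pow]; ring
      _ ≤ (∑ k ∈ Finset.range p, v (a k) * v z ^ k) * v z := by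
        rw [hlead, v.map_neg]
        gcongr
        exact (v.sum_le _ _).trans_eq (by simp only [v.map_mul, v.map_pow])
      _ = ∑ k ∈ Finset.range p, v (a k) * v z ^ (k + 1) := by
        rw [Finset.sum_mul]; simp only [pow_succ, mul_assoc]
      _ ≤ ∑ k ∈ Finset.range p, v (a k) * v z ^ p := Finset.sum_le_sum fun k hk => by
        gcongr
        · exact hz1.le
        · exact Finset.mem_range.1 hk
      _ = (∑ k ∈ Finset.range p, v (a k)) * v z ^ p := by rw [Finset.sum_mul]
  linarith [le_of_mul_le_mul_right key (pow_pos (zero_lt_one.trans hz1) p), v.nonneg (a p)]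

theorem IsModerate.of_sum_mul_pow_eq_zero [Nontrivial R] (hρ : 0 < ρ) (h2 : 2 * ρ ≤ 1) {p : ℕ}
    {a : ℕ → R} {z : R} (ha : ∀ k ≤ p, v.IsModerate ρ (a k)) (hlead : ¬ v.IsNegligible ρ (a p))
    (hz : ∑ k ∈ Finset.range (p + 1), a k * z ^ k = 0) : v.IsModerate ρ z := by
  obtain ⟨n, hn⟩ := exists_pow_le_of_not_isNegligible hlead
  have hsum : AbsoluteValue.abs.IsModerate ρ (∑ k ∈ Finset.range (p + 1), v (a k)) :=
    IsModerate.sum hρ h2 fun k hk =>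
      isModerate_abs_apply_iff.2 (ha k (Nat.lt_succ_iff.1 (Finset.mem_range.1 hk)))
  refine ((isModerate_inv_pow hρ n).mul hsum).of_le ((le_inv_mul_iff₀ (pow_pos hρ n)).2 ?_ |>.trans
    (le_abs_self _))
  exact (mul_le_mul_of_nonneg_right hn (v.nonneg z)).trans (v.mul_le_sum_of_sum_mul_pow_eq_zero hz)

end Ring

section DivisionRing

variable [IsStrictOrderedRing K] [DivisionRing R] {v : AbsoluteValue R K} {ρ : K} {x : R}

theorem exists_isModerate_isNegligible_mul_sub_one (hρ : 0 < ρ) (hx : ¬ v.IsNegligible ρ x) :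
    ∃ y, v.IsModerate ρ y ∧ v.IsNegligible ρ (x * y - 1) := by
  obtain ⟨n, hn⟩ := exists_pow_le_of_not_isNegligible hx
  refine ⟨x⁻¹, ⟨n, ?_⟩, ?_⟩
  · rw [map_inv₀, zpow_neg, zpow_natCast]
    exact inv_anti₀ (pow_pos hρ n) hn
  · rw [mul_inv_cancel₀ (ne_zero_of_not_isNegligible hρ hx), sub_self]
    exact isNegligible_zero hρ

end DivisionRing

end AbsoluteValue

theorem IsAlgClosed.exists_sum_mul_pow_eq_zero {k : Type*} [Field k] [IsAlgClosed k] {p : ℕ}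
    (hp : 1 ≤ p) {c : ℕ → k} (hc : c p ≠ 0) : ∃ z, ∑ j ∈ Finset.range (p + 1), c j * z ^ j = 0 := by
  classical
  set P : Polynomial k := ∑ j ∈ Finset.range (p + 1), .C (c j) * .X ^ j
  have hcoeff : P.coeff p = c p := by simp [P]
  have hdeg : P.degree ≠ 0 := fun h =>
    hc (hcoeff ▸ Polynomial.coeff_eq_zero_of_degree_lt (by rw [h]; exact_mod_cast hp))
  obtain ⟨z, hz⟩ := IsAlgClosed.exists_root P hdeg
  exact ⟨z, by simpa [P, Polynomial.eval_finsetSum] using hz⟩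

namespace Filter.Germ

variable {α : Type*}

def normAbv {l : Filter α} (𝕜 : Type*) [NormedDivisionRing 𝕜] :
    AbsoluteValue (Germ l 𝕜) (Germ l ℝ) where
  toFun := map fun z : 𝕜 => ‖z‖
  map_mul' x y := inductionOn₂ x y fun f g => coe_eq.2 <| .of_forall fun i => norm_mul (f i) (g i)
  nonneg' x := inductionOn x fun f => coe_le.2 <| .of_forall fun i => norm_nonneg (f i)
  eq_zero' x := inductionOn x fun f => by
    simp only [map_coe, ← coe_zero, coe_eq, EventuallyEq, Function.comp_apply, Pi.zero_apply,
      norm_eq_zero]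
  add_le' x y := inductionOn₂ x y fun f g => coe_le.2 <| .of_forall fun i => norm_add_le (f i) (g i)

theorem exists_sum_mul_pow_eq_zero {k : Type*} [Field k] [IsAlgClosed k] (U : Ultrafilter α)
    {p : ℕ} (hp : 1 ≤ p) (a : ℕ → Germ (U : Filter α) k) (hap : a p ≠ 0) :
    ∃ z, ∑ j ∈ Finset.range (p + 1), a j * z ^ j = 0 := by
  choose f hf using fun j => Quot.exists_rep (a j)
  obtain rfl : a = fun j => (f j : Germ (U : Filter α) k) := funext fun j => (hf j).symm
  have hlead : ∀ᶠ i in (U : Filter α), f p i ≠ 0 :=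
    Ultrafilter.eventually_not.2 fun h => hap (coe_eq.2 h)
  have hroot : ∀ i, ∃ z : k, f p i ≠ 0 → ∑ j ∈ Finset.range (p + 1), f j i * z ^ j = 0 := by
    intro i
    by_cases h : f p i = 0
    · exact ⟨0, fun h' => absurd h h'⟩
    · exact (IsAlgClosed.exists_sum_mul_pow_eq_zero (c := fun j => f j i) hp h).imp fun _ hz _ => hz
  choose z hz using hroot
  refine ⟨z, ?_⟩
  calc ∑ j ∈ Finset.range (p + 1), (f j : Germ (U : Filter α) k) * (z : Germ (U : Filter α) k) ^ j
      = ∑ j ∈ Finset.range (p + 1), coeRingHom (U : Filter α) (f j * z ^ j) := rfl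
    _ = coeRingHom (U : Filter α) (∑ j ∈ Finset.range (p + 1), f j * z ^ j) := (map_sum _ _ _).symm
    _ = 0 := coe_eq.2 <| hlead.mono fun i hi => by simpa [Finset.sum_apply] using hz i hi

theorem map_ofReal_re_add_I_mul_map_ofReal_im {l : Filter α} (ζ : Germ l ℂ) :
    map (fun t : ℝ => (t : ℂ)) (map Complex.re ζ) +
      (↑Complex.I : Germ l ℂ) * map (fun t : ℝ => (t : ℂ)) (map Complex.im ζ) = ζ :=
  inductionOn ζ fun f => coe_eq.2 <| .of_forall fun i => by
    simp [mul_comm Complex.I, Complex.re_add_im]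

variable {U : Ultrafilter α}

theorem abs_map_re_le (ζ : Germ (U : Filter α) ℂ) : |map Complex.re ζ| ≤ normAbv ℂ ζ :=
  inductionOn ζ fun f => coe_le.2 <| .of_forall fun i => Complex.abs_re_le_norm (f i)

theorem abs_map_im_le (ζ : Germ (U : Filter α) ℂ) : |map Complex.im ζ| ≤ normAbv ℂ ζ :=
  inductionOn ζ fun f => coe_le.2 <| .of_forall fun i => Complex.abs_im_le_norm (f i)

theorem exists_sq_eq_abs (ξ : Germ (U : Filter α) ℝ) : ∃ η, η ^ 2 = |ξ| :=
  inductionOn ξ fun f => ⟨map (fun t => √|t|) f, by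
    rw [abs_def]
    exact coe_eq.2 <| .of_forall fun i => Real.sq_sqrt (abs_nonneg (f i))⟩

end Filter.Germ

open AbsoluteValue

section

variable {I : Type*} {U : Ultrafilter I} {ρ : Filter.Germ (U : Filter I) ℝ}

theorem moderateGC_iff_isModerate {ζ : Filter.Germ (U : Filter I) ℂ} :
    ModerateGC U ρ ζ ↔ (Filter.Germ.normAbv ℂ).IsModerate ρ ζ := Iff.rfl

theorem negligibleGC_iff_isNegligible {ζ : Filter.Germ (U : Filter I) ℂ} :
    NegligibleGC U ρ ζ ↔ (Filter.Germ.normAbv ℂ).IsNegligible ρ ζ := Iff.rfl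

theorem moderateGR_iff_isModerate {ξ : Filter.Germ (U : Filter I) ℝ} :
    ModerateGR U ρ ξ ↔ AbsoluteValue.abs.IsModerate ρ ξ := Iff.rfl

theorem negligibleGR_iff_isNegligible {ξ : Filter.Germ (U : Filter I) ℝ} :
    NegligibleGR U ρ ξ ↔ AbsoluteValue.abs.IsNegligible ρ ξ := Iff.rfl

end

/-- for a positive infinitesimal `ρ ∈ *ℝ`, the `ρ`-moderate numbers form a
subring of `*ℂ`, the `ρ`-negligible numbers an ideal thereof, and the quotient
`^ρℂ = M_ρ(*ℂ)/N_ρ(*ℂ)` is an algebraically closed field; likewise `^ρℝ` is a field in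
which every element is a square or the negative of a square (a real closed field) and
`^ρℂ = ^ρℝ(i)` — all stated elementwise on representatives. -/
theorem robinson_field_algebraically_closed {I : Type*} (U : Ultrafilter I)
    (ρ : Filter.Germ (U : Filter I) ℝ) (hρ : 0 < ρ)
    (hρinf : ∀ n : ℕ, 1 ≤ n → ρ < ((n : Filter.Germ (U : Filter I) ℝ))⁻¹) :
    -- M_ρ(*ℂ) is a subring of *ℂ
    (ModerateGC U ρ 1 ∧ ModerateGC U ρ 0 ∧
      ∀ ζ ξ, ModerateGC U ρ ζ → ModerateGC U ρ ξ →
        ModerateGC U ρ (ζ + ξ) ∧ ModerateGC U ρ (ζ * ξ) ∧ ModerateGC U ρ (-ζ)) ∧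
    -- N_ρ(*ℂ) is an ideal of M_ρ(*ℂ)
    ((∀ ζ, NegligibleGC U ρ ζ → ModerateGC U ρ ζ) ∧ NegligibleGC U ρ 0 ∧
      (∀ ζ ξ, NegligibleGC U ρ ζ → NegligibleGC U ρ ξ → NegligibleGC U ρ (ζ + ξ)) ∧
      (∀ ζ, NegligibleGC U ρ ζ → NegligibleGC U ρ (-ζ)) ∧
      (∀ ζ ξ, ModerateGC U ρ ζ → NegligibleGC U ρ ξ → NegligibleGC U ρ (ζ * ξ))) ∧
    -- the quotient ^ρℂ is a field
    (∀ ζ, ModerateGC U ρ ζ → ¬ NegligibleGC U ρ ζ →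
      ∃ ξ, ModerateGC U ρ ξ ∧ NegligibleGC U ρ (ζ * ξ - 1)) ∧
    -- ^ρℂ is algebraically closed
    (∀ p : ℕ, 1 ≤ p → ∀ a : ℕ → Filter.Germ (U : Filter I) ℂ,
      (∀ k ≤ p, ModerateGC U ρ (a k)) → ¬ NegligibleGC U ρ (a p) →
      ∃ ζ, ModerateGC U ρ ζ ∧
        NegligibleGC U ρ (∑ k ∈ Finset.range (p + 1), a k * ζ ^ k)) ∧
    -- ^ρℝ is a field ...
    (∀ ξ, ModerateGR U ρ ξ → ¬ NegligibleGR U ρ ξ →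
      ∃ η, ModerateGR U ρ η ∧ NegligibleGR U ρ (ξ * η - 1)) ∧
    -- ... in which every element is a square or the negative of a square
    (∀ ξ, ModerateGR U ρ ξ → ∃ η, ModerateGR U ρ η ∧
      (NegligibleGR U ρ (ξ - η ^ 2) ∨ NegligibleGR U ρ (ξ + η ^ 2))) ∧
    -- ^ρℂ = ^ρℝ(i)
    (∀ ζ, ModerateGC U ρ ζ → ∃ a b, ModerateGR U ρ a ∧ ModerateGR U ρ b ∧
      NegligibleGC U ρ (ζ - (Filter.Germ.map (fun t : ℝ => (t : ℂ)) a +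
        (↑(Complex.I) : Filter.Germ (U : Filter I) ℂ) *
          Filter.Germ.map (fun t : ℝ => (t : ℂ)) b))) := by
  have h2 : 2 * ρ ≤ 1 := ((lt_inv_mul_iff₀ two_pos).1 (by simpa using hρinf 2 one_le_two)).le
  have hρ1 : ρ ≤ 1 := by linarith
  simp only [moderateGC_iff_isModerate, negligibleGC_iff_isNegligible, moderateGR_iff_isModerate,
    negligibleGR_iff_isNegligible]
  refine ⟨⟨isModerate_one, isModerate_zero, fun ζ ξ hζ hξ => ⟨hζ.add hρ h2 hξ, hζ.mul hξ, hζ.neg⟩⟩,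
    ⟨fun ζ hζ => hζ.isModerate, isNegligible_zero hρ, fun ζ ξ hζ hξ => hζ.add hρ h2 hξ,
      fun ζ hζ => hζ.neg, fun ζ ξ hζ hξ => hζ.mul_isNegligible hρ hξ⟩,
    fun ζ _ hζ => exists_isModerate_isNegligible_mul_sub_one hρ hζ, ?_,
    fun ξ _ hξ => exists_isModerate_isNegligible_mul_sub_one hρ hξ, ?_, ?_⟩
  · intro p hp a ha hlead
    obtain ⟨ζ, hζ⟩ :=
      Filter.Germ.exists_sum_mul_pow_eq_zero U hp a (ne_zero_of_not_isNegligible hρ hlead)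
    exact ⟨ζ, IsModerate.of_sum_mul_pow_eq_zero hρ h2 ha hlead hζ, hζ ▸ isNegligible_zero hρ⟩
  · intro ξ hξ
    obtain ⟨η, hη⟩ := Filter.Germ.exists_sq_eq_abs ξ
    have habs : AbsoluteValue.abs.IsModerate ρ |ξ| := isModerate_abs_apply_iff.2 hξ
    refine ⟨η, IsModerate.of_pow hρ hρ1 two_ne_zero (hη ▸ habs), ?_⟩
    rcases abs_choice ξ with h | h
    · exact .inl (by rw [hη, h, sub_self]; exact isNegligible_zero hρ)
    · exact .inr (by rw [hη, h, add_neg_cancel]; exact isNegligible_zero hρ)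
  · intro ζ hζ
    refine ⟨_, _, hζ.of_le (Filter.Germ.abs_map_re_le ζ), hζ.of_le (Filter.Germ.abs_map_im_le ζ), ?_⟩
    rw [Filter.Germ.map_ofReal_re_add_I_mul_map_ofReal_im, sub_self]
    exact isNegligible_zero hρ
end

section
/- Non-archimedean Hahn–Banach extension theorem (Ingleton): Let K be a field equipped with an absolute value |·| : K → ℝ that is multiplicative (|ab| = |a||b|), positive definite (|a| = 0 iff a = 0), and satisfies the ultrametric inequality |a + b| ≤ max(|a|, |b|); assume K is spherically complete: every nonempty family of closed balls {z ∈ K : |z − a_j| ≤ r_j} with the finite intersection property has nonempty intersection. Let V be a K-vector space with an ultra-norm ‖·‖ : V → ℝ (‖x‖ = 0 iff x = 0, ‖c·x‖ = |c|·‖x‖, and ‖x + y‖ ≤ max(‖x‖, ‖y‖)), let W ⊆ V be a K-linear subspace, let T : W → K be K-linear, and let C ≥ 0 satisfy |T(x)| ≤ C·‖x‖ for all x ∈ W. Then there exists a K-linear map M : V → K such that M(x) = T(x) for all x ∈ W and |M(x)| ≤ C·‖x‖ for all x ∈ V. -/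
/-!
Zorn's lemma gives a maximal `C`-bounded partial extension `f` of `T`, and it remains to extend
a bounded `f` to `f.domain ⊔ K ∙ v` for `v ∉ f.domain`. Setting `v ↦ z` is bounded exactly when
`|z + f w| ≤ C ‖w + v‖` for all `w ∈ f.domain`, i.e. when `z` lies in all the closed balls
`B(-f w, C ‖w + v‖)`. Since `|f w₁ - f w₂| ≤ C ‖w₁ - w₂‖ ≤ max (C ‖w₁ + v‖) (C ‖w₂ + v‖)`, the
smaller of any two of these balls has its centre in the larger one, so they pairwise intersect,
and spherical completeness provides `z`.
-/

namespace Ingleton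

def IsSphericallyComplete {K : Type*} [Sub K] (av : K → ℝ) : Prop :=
  ∀ B : Set (K × ℝ), B.Nonempty →
    (∀ p ∈ B, ∀ q ∈ B, ∃ z : K, av (z - p.1) ≤ p.2 ∧ av (z - q.1) ≤ q.2) →
    ∃ z : K, ∀ p ∈ B, av (z - p.1) ≤ p.2

theorem av_neg_one {R : Type*} [Ring R] [Nontrivial R] {av : R → ℝ}
    (hav_nonneg : ∀ a, 0 ≤ av a) (hav_zero : ∀ a, av a = 0 ↔ a = 0)
    (hav_mul : ∀ a b, av (a * b) = av a * av b) : av (-1) = 1 := by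
  have h1 : av 1 = 1 :=
    (mul_eq_left₀ fun h => one_ne_zero ((hav_zero 1).1 h)).1 (by rw [← hav_mul, one_mul])
  have h := hav_mul (-1) (-1)
  rw [neg_mul_neg, one_mul, h1] at h
  nlinarith [hav_nonneg (-1)]

theorem norm_sub_le_max {R V : Type*} [Ring R] [AddCommGroup V] [Module R V]
    {av : R → ℝ} {N : V → ℝ} (hN_smul : ∀ (c : R) (x : V), N (c • x) = av c * N x)
    (hav : av (-1) = 1) (hN_ultra : ∀ x y, N (x + y) ≤ max (N x) (N y)) (x y : V) :
    N (x - y) ≤ max (N x) (N y) := by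
  have hneg : N (-y) = N y := by rw [← neg_one_smul R y, hN_smul, hav, one_mul]
  simpa only [sub_eq_add_neg, hneg] using hN_ultra x (-y)

theorem exists_mem_balls_of_le_max {K : Type*} [AddGroup K] {av : K → ℝ} (h0 : av 0 = 0)
    {a b : K} {r s : ℝ} (hr : 0 ≤ r) (hs : 0 ≤ s)
    (hab : av (a - b) ≤ max r s) (hba : av (b - a) ≤ max r s) :
    ∃ z, av (z - a) ≤ r ∧ av (z - b) ≤ s := by
  rcases le_total r s with h | h
  · exact ⟨a, by rwa [sub_self, h0], by rwa [max_eq_right h] at hab⟩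
  · exact ⟨b, by rwa [max_eq_left h] at hba, by rwa [sub_self, h0]⟩

theorem _root_.LinearPMap.lt_supSpanSingleton {K E F : Type*} [DivisionRing K] [AddCommGroup E]
    [Module K E] [AddCommGroup F] [Module K F] (f : E →ₗ.[K] F) (x : E) (y : F)
    (hx : x ∉ f.domain) : f < f.supSpanSingleton x y hx :=
  lt_of_le_of_ne (f.left_le_sup _ _) fun h => hx <| h ▸
    Submodule.mem_sup_right (Submodule.mem_span_singleton_self x)

section Extension

variable {K : Type*} [Field K] {av : K → ℝ} {V : Type*} [AddCommGroup V] [Module K V]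
  {N : V → ℝ} {C : ℝ}

def IsBoundedBy (av : K → ℝ) (N : V → ℝ) (C : ℝ) (f : V →ₗ.[K] K) : Prop :=
  ∀ x : f.domain, av (f x) ≤ C * N x

theorem isBoundedBy_sSup {c : Set (V →ₗ.[K] K)} (hne : c.Nonempty)
    (hc : DirectedOn (· ≤ ·) c) (h : ∀ f ∈ c, IsBoundedBy av N C f) :
    IsBoundedBy av N C (LinearPMap.sSup c hc) := by
  rintro ⟨x, hx⟩
  obtain ⟨f, hfc, hfx⟩ := (LinearPMap.mem_domain_sSup_iff hne hc).1 hx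
  calc av (LinearPMap.sSup c hc ⟨x, hx⟩) = av (f ⟨x, hfx⟩) :=
        congrArg av (LinearPMap.sSup_apply hc hfc ⟨x, hfx⟩)
    _ ≤ C * N x := h f hfc ⟨x, hfx⟩

theorem exists_forall_av_add_le (hsc : IsSphericallyComplete av) (h0 : av 0 = 0)
    (hN_nonneg : ∀ x, 0 ≤ N x) (hN_sub : ∀ x y, N (x - y) ≤ max (N x) (N y)) (hC : 0 ≤ C)
    {f : V →ₗ.[K] K} (hf : IsBoundedBy av N C f) (v : V) :
    ∃ z : K, ∀ w : f.domain, av (z + f w) ≤ C * N (w + v) := by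
  have hdist : ∀ w₁ w₂ : f.domain,
      av (-f w₁ - -f w₂) ≤ max (C * N (w₁ + v)) (C * N (w₂ + v)) := fun w₁ w₂ =>
    calc av (-f w₁ - -f w₂) = av (f (w₂ - w₁)) := by rw [f.map_sub, neg_sub_neg]
      _ ≤ C * N ((w₂ + v) - (w₁ + v)) := by
        simpa only [add_sub_add_right_eq_sub, Submodule.coe_sub] using hf (w₂ - w₁)
      _ ≤ C * max (N (w₂ + v)) (N (w₁ + v)) := mul_le_mul_of_nonneg_left (hN_sub _ _) hC
      _ = max (C * N (w₁ + v)) (C * N (w₂ + v)) := by rw [mul_max_of_nonneg _ _ hC, max_comm]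
  obtain ⟨z, hz⟩ := hsc (Set.range fun w : f.domain => (-f w, C * N (w + v)))
    (Set.range_nonempty _) <| by
      rintro _ ⟨w₁, rfl⟩ _ ⟨w₂, rfl⟩
      exact exists_mem_balls_of_le_max h0 (mul_nonneg hC (hN_nonneg _))
        (mul_nonneg hC (hN_nonneg _)) (hdist w₁ w₂) ((hdist w₂ w₁).trans_eq (max_comm _ _))
  exact ⟨z, fun w => by simpa only [sub_neg_eq_add] using hz _ ⟨w, rfl⟩⟩

theorem isBoundedBy_supSpanSingleton (hav_nonneg : ∀ a, 0 ≤ av a)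
    (hav_mul : ∀ a b, av (a * b) = av a * av b)
    (hN_smul : ∀ (c : K) (x : V), N (c • x) = av c * N x)
    {f : V →ₗ.[K] K} (hf : IsBoundedBy av N C f) {v : V} (hv : v ∉ f.domain) {z : K}
    (hz : ∀ w : f.domain, av (z + f w) ≤ C * N (w + v)) :
    IsBoundedBy av N C (f.supSpanSingleton v z hv) := by
  rintro ⟨x, hx⟩
  obtain ⟨w, hw, _, hy, rfl⟩ := Submodule.mem_sup.1 hx
  obtain ⟨a, rfl⟩ := Submodule.mem_span_singleton.1 hy
  rw [LinearPMap.supSpanSingleton_apply_mk, RingHom.id_apply]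
  rcases eq_or_ne a 0 with rfl | ha
  · simpa only [zero_smul, add_zero] using hf ⟨w, hw⟩
  calc av (f ⟨w, hw⟩ + a • z) = av a * av (z + f (a⁻¹ • ⟨w, hw⟩)) := by
        rw [← hav_mul, f.map_smul, smul_eq_mul, smul_eq_mul, mul_add, mul_inv_cancel_left₀ ha,
          add_comm]
    _ ≤ av a * (C * N (a⁻¹ • w + v)) := mul_le_mul_of_nonneg_left (hz _) (hav_nonneg a)
    _ = C * N (w + a • v) := by rw [mul_left_comm, ← hN_smul, smul_add, smul_inv_smul₀ ha]

theorem exists_isBoundedBy_domain_eq_top (hsc : IsSphericallyComplete av)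
    (hav_nonneg : ∀ a, 0 ≤ av a) (hav_zero : ∀ a, av a = 0 ↔ a = 0)
    (hav_mul : ∀ a b, av (a * b) = av a * av b) (hN_nonneg : ∀ x, 0 ≤ N x)
    (hN_smul : ∀ (c : K) (x : V), N (c • x) = av c * N x)
    (hN_ultra : ∀ x y, N (x + y) ≤ max (N x) (N y)) (hC : 0 ≤ C)
    (f : V →ₗ.[K] K) (hf : IsBoundedBy av N C f) :
    ∃ g ≥ f, g.domain = ⊤ ∧ IsBoundedBy av N C g := by
  obtain ⟨g, hfg, hg⟩ := zorn_le_nonempty₀ {g | IsBoundedBy av N C g}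
    (fun c hcS hc g hg => ⟨LinearPMap.sSup c hc.directedOn,
      isBoundedBy_sSup ⟨g, hg⟩ hc.directedOn hcS, fun _ => LinearPMap.le_sSup _⟩) f hf
  refine ⟨g, hfg, ?_, hg.prop⟩
  by_contra htop
  obtain ⟨v, -, hv⟩ := SetLike.exists_of_lt (lt_top_iff_ne_top.2 htop)
  obtain ⟨z, hz⟩ := exists_forall_av_add_le hsc ((hav_zero 0).2 rfl) hN_nonneg
    (norm_sub_le_max hN_smul (av_neg_one hav_nonneg hav_zero hav_mul) hN_ultra) hC hg.prop v
  have hlt := g.lt_supSpanSingleton v z hv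
  exact hlt.not_ge <| hg.2 (isBoundedBy_supSpanSingleton hav_nonneg hav_mul hN_smul hg.prop hv hz)
    hlt.le

end Extension

end Ingleton

theorem ingleton_hahn_banach_general
    (K : Type*) [Field K] (av : K → ℝ)
    (hav_nonneg : ∀ a, 0 ≤ av a)
    (hav_zero : ∀ a, av a = 0 ↔ a = 0)
    (hav_mul : ∀ a b, av (a * b) = av a * av b)
    -- spherical completeness: every nonempty family of closed balls with the
    -- (pairwise) finite intersection property has nonempty intersection
    (hsc : ∀ B : Set (K × ℝ), B.Nonempty →
      (∀ p ∈ B, ∀ q ∈ B, ∃ z : K, av (z - p.1) ≤ p.2 ∧ av (z - q.1) ≤ q.2) →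
      ∃ z : K, ∀ p ∈ B, av (z - p.1) ≤ p.2)
    (V : Type*) [AddCommGroup V] [Module K V] (N : V → ℝ)
    (hN_nonneg : ∀ x, 0 ≤ N x)
    (hN_smul : ∀ (c : K) (x : V), N (c • x) = av c * N x)
    (hN_ultra : ∀ x y, N (x + y) ≤ max (N x) (N y))
    (W : Submodule K V) (T : W →ₗ[K] K)
    (C : ℝ) (hC : 0 ≤ C) (hT : ∀ x : W, av (T x) ≤ C * N (x : V)) :
    ∃ M : V →ₗ[K] K, (∀ x : W, M (x : V) = T x) ∧ ∀ x : V, av (M x) ≤ C * N x := by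
  obtain ⟨⟨dom, g⟩, ⟨-, hTg⟩, rfl : dom = ⊤, hg⟩ :=
    Ingleton.exists_isBoundedBy_domain_eq_top hsc hav_nonneg hav_zero hav_mul hN_nonneg hN_smul
      hN_ultra hC ⟨W, T⟩ hT
  exact ⟨g.comp (LinearMap.id.codRestrict ⊤ fun _ => trivial), fun x => (hTg rfl).symm,
    fun x => hg ⟨x, trivial⟩⟩

/-- Ingleton's non-archimedean Hahn–Banach theorem: let `K` be a field with
a non-archimedean absolute value `av` which is spherically complete, let `V` be a
`K`-vector space with an ultra-norm `N`, `W ⊆ V` a subspace, `T : W → K` linear and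
`C ≥ 0` with `av (T x) ≤ C * N x` on `W`. Then `T` extends to a linear `M : V → K` with
`av (M x) ≤ C * N x` on all of `V`. -/
theorem ingleton_hahn_banach
    (K : Type*) [Field K] (av : K → ℝ)
    (hav_nonneg : ∀ a, 0 ≤ av a)
    (hav_zero : ∀ a, av a = 0 ↔ a = 0)
    (hav_mul : ∀ a b, av (a * b) = av a * av b)
    (hav_ultra : ∀ a b, av (a + b) ≤ max (av a) (av b))
    -- spherical completeness: every nonempty family of closed balls with the
    -- (pairwise) finite intersection property has nonempty intersection
    (hsc : ∀ B : Set (K × ℝ), B.Nonempty →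
      (∀ p ∈ B, ∀ q ∈ B, ∃ z : K, av (z - p.1) ≤ p.2 ∧ av (z - q.1) ≤ q.2) →
      ∃ z : K, ∀ p ∈ B, av (z - p.1) ≤ p.2)
    (V : Type*) [AddCommGroup V] [Module K V] (N : V → ℝ)
    (hN_nonneg : ∀ x, 0 ≤ N x)
    (hN_zero : ∀ x, N x = 0 ↔ x = 0)
    (hN_smul : ∀ (c : K) (x : V), N (c • x) = av c * N x)
    (hN_ultra : ∀ x y, N (x + y) ≤ max (N x) (N y))
    (W : Submodule K V) (T : W →ₗ[K] K)
    (C : ℝ) (hC : 0 ≤ C) (hT : ∀ x : W, av (T x) ≤ C * N (x : V)) :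
    ∃ M : V →ₗ[K] K, (∀ x : W, M (x : V) = T x) ∧ ∀ x : V, av (M x) ≤ C * N x :=
  ingleton_hahn_banach_general K av hav_nonneg hav_zero hav_mul hsc V N hN_nonneg hN_smul hN_ultra W
    T C hC hT
end
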